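/- arXiv:2107.13839 — 3 statements merged into one kernel-verified Lean document; each statement's English description precedes it below -/
import Mathlib

section
/- Let B_1, B_2 be two disks in R^2 with centers z_1 = (-r_1 - ε/2, 0), z_2 = (r_2 + ε/2, 0) and radii r_1, r_2 > 0, where ε > 0 (so dist(B_1,B_2) = ε). Define the inversions R_j(x) = r_j^2 (x - z_j)/|x - z_j|^2 + z_j for j = 1,2. Then the point p_1 = (-( (r_1 - r_2)ε/2 + √ε · τ )/(r_1 + r_2 + ε), 0), where τ = √(2 r_1 r_2 (r_1 + r_2) + (r_1^2 + 3 r_1 r_2 + r_2^2) ε + (r_1 + r_2) ε^2 + ε^3/4), is a fixed point of the composition R_1 ∘ R_2, i.e. R_1(R_2(p_1)) = p_1. -/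
/-!
Both centres lie on the first axis, and an inversion centred on that axis maps it to itself,
acting there as the one-dimensional inversion `x ↦ c + r² / (x - c)`. Clearing denominators,
a point `a` of the axis is fixed by `R₁ ∘ R₂` when it solves a quadratic equation whose
discriminant is `4 ε τ²`; `p₁` is its smaller root.
-/

open Real

noncomputable section

abbrev E2 := EuclideanSpace ℝ (Fin 2)

theorem inversion_on_axis (r c x : ℝ) :
    (r ^ 2 / ‖(!₂[x, 0] : E2) - !₂[c, 0]‖ ^ 2) • ((!₂[x, 0] : E2) - !₂[c, 0]) + !₂[c, 0]
      = (!₂[r ^ 2 / (x - c) + c, 0] : E2) := by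
  have hsub : (!₂[x, 0] : E2) - !₂[c, 0] = !₂[x - c, 0] := by
    ext i; fin_cases i <;> simp
  have hscalar : r ^ 2 / (x - c) ^ 2 * (x - c) = r ^ 2 / (x - c) := by
    rcases eq_or_ne (x - c) 0 with h | h
    · simp [h]
    · field_simp
  rw [hsub, EuclideanSpace.norm_eq, Real.sq_sqrt (by positivity)]
  ext i; fin_cases i <;> simp [← hscalar]

theorem inversion_comp_inversion_eq_self_of_quadratic {r₁ r₂ c₁ c₂ a : ℝ} (hr₁ : r₁ ≠ 0)
    (hr₂ : r₂ ≠ 0) (hc : c₁ ≠ c₂)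
    (h : (a - c₁) * (r₂ ^ 2 + (c₂ - c₁) * (a - c₂)) = r₁ ^ 2 * (a - c₂)) :
    r₁ ^ 2 / (r₂ ^ 2 / (a - c₂) + c₂ - c₁) + c₁ = a := by
  have ha : a - c₂ ≠ 0 := by
    intro h0
    rw [h0, mul_zero, mul_zero, add_zero, sub_eq_zero.mp h0] at h
    exact mul_ne_zero (sub_ne_zero.mpr hc.symm) (pow_ne_zero 2 hr₂) h
  have hb : r₂ ^ 2 / (a - c₂) + c₂ - c₁ = (r₂ ^ 2 + (c₂ - c₁) * (a - c₂)) / (a - c₂) := by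
    field_simp; ring
  have hprod : (a - c₁) * (r₂ ^ 2 / (a - c₂) + c₂ - c₁) = r₁ ^ 2 := by
    rw [hb, ← mul_div_assoc, h, mul_div_cancel_right₀ _ ha]
  have hb0 : r₂ ^ 2 / (a - c₂) + c₂ - c₁ ≠ 0 := by
    rintro h0; rw [h0, mul_zero] at hprod; exact pow_ne_zero 2 hr₁ hprod.symm
  rw [← hprod, mul_div_cancel_right₀ _ hb0]; ring

theorem root_of_axis_fixed_point_quadratic (r₁ r₂ ε u : ℝ) (hD : r₁ + r₂ + ε ≠ 0)
    (hu : u ^ 2 = ε * (2 * r₁ * r₂ * (r₁ + r₂) + (r₁ ^ 2 + 3 * r₁ * r₂ + r₂ ^ 2) * ε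
      + (r₁ + r₂) * ε ^ 2 + ε ^ 3 / 4)) :
    let a := -(((r₁ - r₂) * ε / 2 + u) / (r₁ + r₂ + ε))
    (a - (-r₁ - ε / 2)) * (r₂ ^ 2 + (r₂ + ε / 2 - (-r₁ - ε / 2)) * (a - (r₂ + ε / 2)))
      = r₁ ^ 2 * (a - (r₂ + ε / 2)) := by
  intro a
  simp only [a]
  field_simp
  linear_combination 8 * (r₁ + r₂ + ε) * hu

/-- the point `p₁` is a fixed point of the composed inversions `R₁ ∘ R₂`. -/
theorem fixed_point_R1_R2 (r1 r2 ε : ℝ) (hr1 : 0 < r1) (hr2 : 0 < r2) (hε : 0 < ε) :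
    let z1 : E2 := !₂[-r1 - ε / 2, 0]
    let z2 : E2 := !₂[r2 + ε / 2, 0]
    let R1 : E2 → E2 := fun x => (r1 ^ 2 / ‖x - z1‖ ^ 2) • (x - z1) + z1
    let R2 : E2 → E2 := fun x => (r2 ^ 2 / ‖x - z2‖ ^ 2) • (x - z2) + z2
    let τ : ℝ := Real.sqrt (2 * r1 * r2 * (r1 + r2) + (r1 ^ 2 + 3 * r1 * r2 + r2 ^ 2) * ε
      + (r1 + r2) * ε ^ 2 + ε ^ 3 / 4)
    let p1 : E2 := !₂[-(((r1 - r2) * ε / 2 + Real.sqrt ε * τ) / (r1 + r2 + ε)), 0]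
    R1 (R2 p1) = p1 := by
  intro z1 z2 R1 R2 τ p1
  have hu : (√ε * τ) ^ 2 = ε * (2 * r1 * r2 * (r1 + r2) + (r1 ^ 2 + 3 * r1 * r2 + r2 ^ 2) * ε
      + (r1 + r2) * ε ^ 2 + ε ^ 3 / 4) := by
    rw [mul_pow, sq_sqrt hε.le, sq_sqrt (by positivity)]
  have hquad := root_of_axis_fixed_point_quadratic r1 r2 ε _ (by positivity) hu
  have hc : -r1 - ε / 2 ≠ r2 + ε / 2 := by linarith
  simp only [R1, R2, z1, z2, p1, inversion_on_axis]
  rw [inversion_comp_inversion_eq_self_of_quadratic hr1.ne' hr2.ne' hc hquad]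
end
end

section
/- With the same setup (disks B_1, B_2 with centers z_1 = (-r_1-ε/2,0), z_2 = (r_2+ε/2,0), radii r_1, r_2, inversions R_1, R_2, and τ = √(2 r_1 r_2 (r_1+r_2) + (r_1^2+3 r_1 r_2+r_2^2) ε + (r_1+r_2) ε^2 + ε^3/4)), the point p_2 = (( (r_2 - r_1)ε/2 + √ε · τ )/(r_1 + r_2 + ε), 0) is a fixed point of R_2 ∘ R_1, i.e. R_2(R_1(p_2)) = p_2. -/
/-!
Both inversions preserve the first coordinate axis, on which inversion in the circle of centre `c`
and radius `r` acts as `x ↦ r² / (x - c) + c`. Clearing denominators, `x` is a fixed point of the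
composite `R₂ ∘ R₁` iff `u = x - c₁` solves `d u² - (d² + r₁² - r₂²) u + d r₁² = 0`, where
`d = c₂ - c₁ = r₁ + r₂ + ε`. The discriminant of this quadratic is `4 ε τ²`, and the first
coordinate of `p₂` is `c₁` plus its larger root.
-/

open Real

noncomputable section

namespace EuclideanGeometry

theorem inversion_eq_smul_sub_add {V : Type*} [NormedAddCommGroup V] [InnerProductSpace ℝ V]
    (c : V) (R : ℝ) (x : V) : inversion c R x = (R ^ 2 / ‖x - c‖ ^ 2) • (x - c) + c := by
  rw [inversion, div_pow, dist_eq_norm, vsub_eq_sub, vadd_eq_add]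

theorem _root_.AffineIsometry.map_inversion {V₁ V₂ P₁ P₂ : Type*} [NormedAddCommGroup V₁]
    [InnerProductSpace ℝ V₁] [MetricSpace P₁] [NormedAddTorsor V₁ P₁] [NormedAddCommGroup V₂]
    [InnerProductSpace ℝ V₂] [MetricSpace P₂] [NormedAddTorsor V₂ P₂] (f : P₁ →ᵃⁱ[ℝ] P₂)
    (c : P₁) (R : ℝ) (x : P₁) : f (inversion c R x) = inversion (f c) R (f x) := by
  simp only [inversion_eq_lineMap, f.dist_map]
  exact f.toAffineMap.apply_lineMap c x _

-- Also valid at `x = c`, where both sides are `c`.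
theorem real_inversion_eq (c R x : ℝ) : inversion c R x = R ^ 2 / (x - c) + c := by
  rw [inversion_eq_smul_sub_add, Real.norm_eq_abs, sq_abs, smul_eq_mul, div_mul_eq_mul_div,
    mul_div_assoc, sq (x - c), div_self_mul_self', div_eq_mul_inv]

theorem real_inversion_inversion_eq_self {c₁ c₂ r₁ r₂ x : ℝ} (hx : x ≠ c₁)
    (hd : (c₂ - c₁) * (x - c₁) ≠ r₁ ^ 2)
    (h : r₂ ^ 2 * (x - c₁) = (x - c₂) * (r₁ ^ 2 - (c₂ - c₁) * (x - c₁))) :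
    inversion c₂ r₂ (inversion c₁ r₁ x) = x := by
  have hu : x - c₁ ≠ 0 := sub_ne_zero.mpr hx
  have hv : r₁ ^ 2 - (c₂ - c₁) * (x - c₁) ≠ 0 := sub_ne_zero.mpr hd.symm
  have hw : r₁ ^ 2 / (x - c₁) + c₁ - c₂ = (r₁ ^ 2 - (c₂ - c₁) * (x - c₁)) / (x - c₁) := by
    field_simp
    ring
  rw [real_inversion_eq, real_inversion_eq, hw, div_div_eq_mul_div, h, mul_div_cancel_right₀ _ hv]
  ring

end EuclideanGeometry

open EuclideanGeometry

def xAxis : ℝ →ᵃⁱ[ℝ] E2 :=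
  (LinearIsometry.toSpanSingleton ℝ E2 (v := !₂[1, 0])
    (by simp [EuclideanSpace.norm_eq])).toAffineIsometry

theorem xAxis_apply (x : ℝ) : xAxis x = !₂[x, 0] := by
  ext i
  fin_cases i <;> simp [xAxis]

/-- the point `p₂` is a fixed point of the composed inversions `R₂ ∘ R₁`. -/
theorem fixed_point_R2_R1 (r1 r2 ε : ℝ) (hr1 : 0 < r1) (hr2 : 0 < r2) (hε : 0 < ε) :
    let z1 : E2 := !₂[-r1 - ε / 2, 0]
    let z2 : E2 := !₂[r2 + ε / 2, 0]
    let R1 : E2 → E2 := fun x => (r1 ^ 2 / ‖x - z1‖ ^ 2) • (x - z1) + z1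
    let R2 : E2 → E2 := fun x => (r2 ^ 2 / ‖x - z2‖ ^ 2) • (x - z2) + z2
    let τ : ℝ := Real.sqrt (2 * r1 * r2 * (r1 + r2) + (r1 ^ 2 + 3 * r1 * r2 + r2 ^ 2) * ε
      + (r1 + r2) * ε ^ 2 + ε ^ 3 / 4)
    let p2 : E2 := !₂[((r2 - r1) * ε / 2 + Real.sqrt ε * τ) / (r1 + r2 + ε), 0]
    R2 (R1 p2) = p2 := by
  intro z1 z2 R1 R2 τ p2
  set x := ((r2 - r1) * ε / 2 + √ε * τ) / (r1 + r2 + ε) with hx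
  have hd : 0 < r1 + r2 + ε := by positivity
  have hdu : (r1 + r2 + ε) * (x - (-r1 - ε / 2))
      = ((r1 + r2 + ε) ^ 2 + r1 ^ 2 - r2 ^ 2) / 2 + √ε * τ := by
    rw [hx]
    field_simp
    ring
  have hsq : (√ε * τ) ^ 2 = ε * (2 * r1 * r2 * (r1 + r2) + (r1 ^ 2 + 3 * r1 * r2 + r2 ^ 2) * ε
      + (r1 + r2) * ε ^ 2 + ε ^ 3 / 4) := by
    rw [mul_pow, sq_sqrt hε.le, sq_sqrt (by positivity)]
  have hdu_gt : r1 ^ 2 < (r1 + r2 + ε) * (x - (-r1 - ε / 2)) := by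
    rw [hdu]
    nlinarith [mul_pos hr1 hr2, mul_pos (add_pos hr1 hr2) hε, (by positivity : 0 < √ε * τ)]
  have hu : 0 < x - (-r1 - ε / 2) := pos_of_mul_pos_right ((sq_nonneg r1).trans_lt hdu_gt) hd.le
  have hD : r2 + ε / 2 - (-r1 - ε / 2) = r1 + r2 + ε := by ring
  simp only [R1, R2, z1, z2, p2, ← inversion_eq_smul_sub_add, ← xAxis_apply, ← xAxis.map_inversion]
  rw [real_inversion_inversion_eq_self (sub_pos.mp hu).ne']
  · rw [hD]
    exact hdu_gt.ne'
  · rw [hD]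
    refine mul_left_cancel₀ hd.ne' ?_
    linear_combination ((r1 + r2 + ε) * (x - (-r1 - ε / 2))
      - ((r1 + r2 + ε) ^ 2 + r1 ^ 2 - r2 ^ 2) / 2 + √ε * τ) * hdu + hsq
end
end

section
/- Let B_1, B_2 be the two disks with centers z_1 = (-r_1-ε/2,0), z_2 = (r_2+ε/2,0) and radii r_1, r_2, and let p_1 = (-( (r_1-r_2)ε/2 + √ε τ)/(r_1+r_2+ε), 0), p_2 = (((r_2-r_1)ε/2 + √ε τ)/(r_1+r_2+ε), 0) with τ = √(2r_1r_2(r_1+r_2) + (r_1^2+3r_1r_2+r_2^2)ε + (r_1+r_2)ε^2 + ε^3/4). Then for every x ∈ R^2 \ (B_1 ∪ B_2), |x - p_1| ≥ (-(2r_2+ε)ε/2 + √ε τ)/(r_1+r_2+ε) and |x - p_2| ≥ (-(2r_1+ε)ε/2 + √ε τ)/(r_1+r_2+ε). -/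
/-!
Both points lie on the line of centres: `p₁ = (-a₁, 0)` sits at distance `r₁ + ε/2 - a₁` from
`z₁`, so for `x` outside `B₁` the triangle inequality gives `|x - p₁| ≥ a₁ - ε/2`, which is the
stated bound. It only remains to see that `a₁ ≤ r₁ + ε/2`, i.e. `√ε τ ≤ Q₁` with
`Q₁ = r₁² + r₁r₂ + (r₁ + r₂)ε + ε²/2`; this holds because `ε τ² = Q₁² - (r₁(r₁ + r₂ + ε))²`.
The same argument, with `r₁` and `r₂` exchanged, handles `p₂`.
-/

open Real

noncomputable section

def tauSq (r1 r2 ε : ℝ) : ℝ :=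
  2 * r1 * r2 * (r1 + r2) + (r1 ^ 2 + 3 * r1 * r2 + r2 ^ 2) * ε + (r1 + r2) * ε ^ 2 + ε ^ 3 / 4

lemma tauSq_comm (r1 r2 ε : ℝ) : tauSq r1 r2 ε = tauSq r2 r1 ε := by
  unfold tauSq; ring

lemma mul_tauSq_eq_sq_sub_sq (r1 r2 ε : ℝ) :
    ε * tauSq r1 r2 ε =
      (r1 ^ 2 + r1 * r2 + (r1 + r2) * ε + ε ^ 2 / 2) ^ 2 - (r1 * (r1 + r2 + ε)) ^ 2 := by
  unfold tauSq; ring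

lemma sqrt_mul_sqrt_tauSq_le {r1 r2 ε : ℝ} (hr1 : 0 ≤ r1) (hr2 : 0 ≤ r2) (hε : 0 ≤ ε) :
    √ε * √(tauSq r1 r2 ε) ≤ r1 ^ 2 + r1 * r2 + (r1 + r2) * ε + ε ^ 2 / 2 := by
  rw [← sqrt_mul hε, sqrt_le_iff, mul_tauSq_eq_sq_sub_sq]
  exact ⟨by positivity, by nlinarith [sq_nonneg (r1 * (r1 + r2 + ε))]⟩

lemma fixedPoint_coord_le {r1 r2 ε : ℝ} (hr1 : 0 ≤ r1) (hr2 : 0 ≤ r2) (hε : 0 < ε) :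
    ((r1 - r2) * ε / 2 + √ε * √(tauSq r1 r2 ε)) / (r1 + r2 + ε) ≤ r1 + ε / 2 := by
  rw [div_le_iff₀ (by positivity)]
  nlinarith [sqrt_mul_sqrt_tauSq_le hr1 hr2 hε.le]

lemma dist_vec_zero_vec_zero (a b : ℝ) : dist (!₂[a, 0] : E2) !₂[b, 0] = |a - b| := by
  simp [EuclideanSpace.dist_eq, Real.dist_eq, Real.sqrt_sq_eq_abs]

lemma sub_dist_le_norm_sub_of_notMem_ball {E : Type*} [SeminormedAddCommGroup E] {x z p : E}
    {r : ℝ} (hx : x ∉ Metric.ball z r) : r - dist p z ≤ ‖x - p‖ := by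
  rw [Metric.mem_ball, not_lt] at hx
  linarith [dist_triangle x p z, dist_eq_norm x p]

/-- lower bounds on the distances from any point `x ∉ B₁ ∪ B₂` to the
fixed points `p₁, p₂` of the composed inversions. -/
theorem dist_to_fixed_points (r1 r2 ε : ℝ) (hr1 : 0 < r1) (hr2 : 0 < r2) (hε : 0 < ε) :
    let z1 : E2 := !₂[-r1 - ε / 2, 0]
    let z2 : E2 := !₂[r2 + ε / 2, 0]
    let τ : ℝ := Real.sqrt (2 * r1 * r2 * (r1 + r2) + (r1 ^ 2 + 3 * r1 * r2 + r2 ^ 2) * ε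
      + (r1 + r2) * ε ^ 2 + ε ^ 3 / 4)
    let p1 : E2 := !₂[-(((r1 - r2) * ε / 2 + Real.sqrt ε * τ) / (r1 + r2 + ε)), 0]
    let p2 : E2 := !₂[((r2 - r1) * ε / 2 + Real.sqrt ε * τ) / (r1 + r2 + ε), 0]
    ∀ x : E2, x ∉ Metric.ball z1 r1 ∪ Metric.ball z2 r2 →
      (-(2 * r2 + ε) * ε / 2 + Real.sqrt ε * τ) / (r1 + r2 + ε) ≤ ‖x - p1‖ ∧
      (-(2 * r1 + ε) * ε / 2 + Real.sqrt ε * τ) / (r1 + r2 + ε) ≤ ‖x - p2‖ := by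
  intro z1 z2 τ p1 p2 x hx
  rw [Set.mem_union, not_or] at hx
  have hτ : τ = √(tauSq r1 r2 ε) := rfl
  have hD : r1 + r2 + ε ≠ 0 := by positivity
  have ha1 := fixedPoint_coord_le hr1.le hr2.le hε
  have ha2 := fixedPoint_coord_le hr2.le hr1.le hε
  rw [tauSq_comm, add_comm r2] at ha2
  have hd1 := dist_vec_zero_vec_zero (-(((r1 - r2) * ε / 2 + √ε * τ) / (r1 + r2 + ε))) (-r1 - ε / 2)
  have hd2 := dist_vec_zero_vec_zero (((r2 - r1) * ε / 2 + √ε * τ) / (r1 + r2 + ε)) (r2 + ε / 2)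
  rw [abs_of_nonneg (by rw [hτ]; linarith)] at hd1
  rw [abs_of_nonpos (by rw [hτ]; linarith)] at hd2
  have hb1 := sub_dist_le_norm_sub_of_notMem_ball (p := p1) hx.1
  have hb2 := sub_dist_le_norm_sub_of_notMem_ball (p := p2) hx.2
  constructor
  · rw [show (-(2 * r2 + ε) * ε / 2 + √ε * τ) / (r1 + r2 + ε)
        = ((r1 - r2) * ε / 2 + √ε * τ) / (r1 + r2 + ε) - ε / 2 by field_simp; ring]
    linarith
  · rw [show (-(2 * r1 + ε) * ε / 2 + √ε * τ) / (r1 + r2 + ε)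
        = ((r2 - r1) * ε / 2 + √ε * τ) / (r1 + r2 + ε) - ε / 2 by field_simp; ring]
    linarith
end
end
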